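/- arXiv:math/0404414 — 3 statements merged into one kernel-verified Lean document; each statement's English description precedes it below -/
import Mathlib

section
/- Let $X$ be a Banach space, $a>0$, $\delta>0$, and $r:(a,\infty)\to X$ continuous with $\|r(\lambda)\|\le M/\lambda^{\delta}$ for all $\lambda>a$. If $\alpha,\beta>0$ satisfy $\alpha+\beta<\delta$, then the iterated fractional integrals satisfy the semigroup law $(r_\alpha)_\beta = r_{\alpha+\beta}$, where $r_\alpha(\lambda)=\int_\lambda^\infty \frac{(u-\lambda)^{\alpha-1}}{\Gamma(\alpha)} r(u)\,du$. -/
/-!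
Both sides are integrals over the wedge `l < u < v` of `k_β(u - l) k_α(v - u) r(v)`, where
`k_γ(t) = t ^ (γ - 1) / Γ(γ)`: integrating first in `v` gives the iterated fractional integral,
integrating first in `u` gives `k_{α+β}(v - l) r(v)` by the Beta integral. Fubini applies because
the same computation with `‖r‖` in place of `r` is finite: near `v = l` the kernel
`(v - l) ^ (α + β - 1)` is integrable, and at infinity `‖r v‖ = O(v ^ (-δ))` with `α + β < δ`.
-/

open MeasureTheory Set Filter Asymptotics Topology

lemma integral_rpow_mul_sub_rpow {α β a : ℝ} (hα : 0 < α) (hβ : 0 < β) (ha : 0 < a) :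
    ∫ t in 0..a, t ^ (β - 1) * (a - t) ^ (α - 1)
      = a ^ (β + α - 1) * (Real.Gamma β * Real.Gamma α / Real.Gamma (β + α)) := by
  have h := Complex.betaIntegral_scaled β α ha
  rw [Complex.betaIntegral_eq_Gamma_mul_div _ _ (by simpa) (by simpa)] at h
  apply Complex.ofReal_injective
  rw [← intervalIntegral.integral_ofReal]
  convert h using 1
  · refine intervalIntegral.integral_congr fun t ht => ?_
    rw [uIcc_of_le ha.le] at ht
    push_cast [Complex.ofReal_cpow ht.1, Complex.ofReal_cpow (sub_nonneg.2 ht.2)]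
    rfl
  · push_cast [Complex.ofReal_cpow ha.le, ← Complex.Gamma_ofReal]
    rfl

noncomputable def fracKernel (α t : ℝ) : ℝ := t ^ (α - 1) / Real.Gamma α

lemma continuousOn_fracKernel (α : ℝ) : ContinuousOn (fracKernel α) (Ioi 0) :=
  (continuousOn_id.rpow_const fun _ ht => Or.inl (ne_of_gt ht)).div_const _

lemma fracKernel_pos {α t : ℝ} (hα : 0 < α) (ht : 0 < t) : 0 < fracKernel α t :=
  div_pos (Real.rpow_pos_of_pos ht _) (Real.Gamma_pos_of_pos hα)

lemma integral_Ioo_fracKernel_mul_fracKernel {α β l v : ℝ} (hα : 0 < α) (hβ : 0 < β)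
    (hlv : l < v) :
    ∫ u in Ioo l v, fracKernel β (u - l) * fracKernel α (v - u) = fracKernel (α + β) (v - l) := by
  have hshift := intervalIntegral.integral_comp_sub_right
    (fun t => fracKernel β t * fracKernel α (v - l - t)) l (a := l) (b := v)
  simp only [sub_self, sub_sub_sub_cancel_right] at hshift
  rw [← integral_Ioc_eq_integral_Ioo, ← intervalIntegral.integral_of_le hlv.le, hshift]
  simp only [fracKernel, div_mul_div_comm, intervalIntegral.integral_div,
    integral_rpow_mul_sub_rpow hα hβ (sub_pos.2 hlv), add_comm β α]
  field_simp [(Real.Gamma_pos_of_pos hα).ne', (Real.Gamma_pos_of_pos hβ).ne']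

lemma integrableOn_Ioo_fracKernel_mul_fracKernel {α β l v : ℝ} (hα : 0 < α) (hβ : 0 < β)
    (hlv : l < v) :
    IntegrableOn (fun u => fracKernel β (u - l) * fracKernel α (v - u)) (Ioo l v) :=
  -- a non-integrable function would have integral `0`, but this integral is positive
  Integrable.of_integral_ne_zero <| by
    rw [integral_Ioo_fracKernel_mul_fracKernel hα hβ hlv]
    exact (fracKernel_pos (add_pos hα hβ) (sub_pos.2 hlv)).ne'

lemma sub_rpow_isBigO_rpow (u γ : ℝ) :
    (fun v : ℝ => (v - u) ^ γ) =O[atTop] fun v => v ^ γ := by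
  have hequiv : (fun v : ℝ => v - u) ~[atTop] id := by
    simpa [sub_eq_add_neg] using
      (IsEquivalent.refl (u := (id : ℝ → ℝ))).add_const_of_norm_tendsto_atTop (c := -u)
        tendsto_norm_atTop_atTop
  refine (hequiv.isTheta.rpow ?_ ?_).isBigO
  · filter_upwards [eventually_ge_atTop u] with v hv using sub_nonneg.2 hv
  · filter_upwards [eventually_ge_atTop 0] with v hv using hv

lemma integrableAtFilter_sub_rpow_nhdsGT {u γ : ℝ} (hγ : -1 < γ) :
    IntegrableAtFilter (fun v : ℝ => (v - u) ^ γ) (𝓝[>] u) := by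
  refine ⟨Ioo u (u + 1), Ioo_mem_nhdsGT (lt_add_one u), ?_⟩
  rw [← intervalIntegrable_iff_integrableOn_Ioo_of_le (le_add_of_nonneg_right zero_le_one)]
  simpa [add_comm] using
    (intervalIntegral.intervalIntegrable_rpow' hγ (a := 0) (b := 1)).comp_sub_right u

lemma integrableOn_Ioi_sub_rpow_smul {X : Type*} [NormedAddCommGroup X] [NormedSpace ℝ X]
    {r : ℝ → X} {u γ δ : ℝ} (hγ : 0 < γ) (hγδ : γ < δ)
    (hr : ContinuousOn r (Ici u)) (hdecay : r =O[atTop] fun v => v ^ (-δ)) :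
    IntegrableOn (fun v => (v - u) ^ (γ - 1) • r v) (Ioi u) := by
  have hcont : ContinuousOn (fun v => (v - u) ^ (γ - 1) • r v) (Ioi u) :=
    ((continuousOn_id.sub continuousOn_const).rpow_const fun v hv =>
      Or.inl (sub_ne_zero.2 (ne_of_gt hv))).smul (hr.mono Ioi_subset_Ici_self)
  have hmeas (l : Filter ℝ) (hl : Ioi u ∈ l) :
      StronglyMeasurableAtFilter (fun v => (v - u) ^ (γ - 1) • r v) l :=
    ⟨Ioi u, hl, hcont.aestronglyMeasurable measurableSet_Ioi⟩
  refine integrableOn_Ioi_iff_integrableAtFilter_atTop_nhdsWithin.2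
    ⟨?_, ?_, hcont.locallyIntegrableOn measurableSet_Ioi⟩
  · have hO : (fun v => (v - u) ^ (γ - 1) • r v) =O[atTop] fun v => v ^ (γ - 1 - δ) := by
      refine ((sub_rpow_isBigO_rpow u (γ - 1)).smul hdecay).congr' .rfl ?_
      filter_upwards [eventually_gt_atTop 0] with v hv
      rw [smul_eq_mul, ← Real.rpow_add hv, sub_eq_add_neg (γ - 1)]
    exact hO.integrableAtFilter (hmeas _ (Ioi_mem_atTop u))
      (integrableAtFilter_rpow_atTop_iff.2 (by linarith))
  · have hbdd : r =O[𝓝[>] u] fun _ => (1 : ℝ) :=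
      ((hr.continuousWithinAt self_mem_Ici).mono Ioi_subset_Ici_self).tendsto.isBigO_one ℝ
    have hO : (fun v => (v - u) ^ (γ - 1) • r v) =O[𝓝[>] u] fun v => (v - u) ^ (γ - 1) := by
      simpa using (isBigO_refl (fun v => (v - u) ^ (γ - 1)) _).smul hbdd
    exact hO.integrableAtFilter (hmeas _ self_mem_nhdsWithin)
      (integrableAtFilter_sub_rpow_nhdsGT (by linarith))

def wedge (l : ℝ) : Set (ℝ × ℝ) := {p | l < p.1 ∧ p.1 < p.2}

lemma measurableSet_wedge (l : ℝ) : MeasurableSet (wedge l) :=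
  (measurableSet_lt measurable_const measurable_fst).inter
    (measurableSet_lt measurable_fst measurable_snd)

section Wedge

variable {E : Type*} [NormedAddCommGroup E] {l : ℝ} {F : ℝ → ℝ → E}

lemma integral_indicator_wedge_fst [NormedSpace ℝ E] (v : ℝ) :
    ∫ u, (wedge l).indicator (Function.uncurry F) (u, v)
      = (Ioi l).indicator (fun v => ∫ u in Ioo l v, F u v) v := by
  by_cases hv : v ∈ Ioi l
  · rw [indicator_of_mem hv, ← integral_indicator measurableSet_Ioo]
    -- `(u, v) ∈ wedge l` and `u ∈ Ioo l v` unfold to the same condition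
    rfl
  · have hS (u : ℝ) : (u, v) ∉ wedge l := fun hu => hv (hu.1.trans hu.2)
    simp [indicator_of_notMem hv, indicator_of_notMem (hS _)]

lemma integral_indicator_wedge_snd [NormedSpace ℝ E] (u : ℝ) :
    ∫ v, (wedge l).indicator (Function.uncurry F) (u, v)
      = (Ioi l).indicator (fun u => ∫ v in Ioi u, F u v) u := by
  by_cases hu : u ∈ Ioi l
  · rw [indicator_of_mem hu, ← integral_indicator measurableSet_Ioi]
    congr 1 with v
    simp_all [wedge, indicator_apply]
  · simp_all [wedge]

lemma integrableOn_wedge_of_integrableOn_Ioo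
    (hmeas : AEStronglyMeasurable (Function.uncurry F) (volume.restrict (wedge l)))
    (hslice : ∀ v, l < v → IntegrableOn (fun u => F u v) (Ioo l v))
    (hnorm : IntegrableOn (fun v => ∫ u in Ioo l v, ‖F u v‖) (Ioi l)) :
    IntegrableOn (Function.uncurry F) (wedge l) := by
  rw [← integrable_indicator_iff (measurableSet_wedge l), Measure.volume_eq_prod,
    integrable_prod_iff' ((aestronglyMeasurable_indicator_iff (measurableSet_wedge l)).2 hmeas)]
  refine ⟨.of_forall fun v => ?_, ?_⟩
  · by_cases hv : v ∈ Ioi l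
    · exact (integrable_indicator_iff measurableSet_Ioo).2 (hslice v hv)
    · have hS (u : ℝ) : (u, v) ∉ wedge l := fun hu => hv (hu.1.trans hu.2)
      simp [indicator_of_notMem (hS _)]
  · simp only [norm_indicator_eq_indicator_norm]
    exact (integrable_indicator_iff measurableSet_Ioi).2 hnorm |>.congr
      (.of_forall fun v => (integral_indicator_wedge_fst (F := fun u v => ‖F u v‖) v).symm)

lemma setIntegral_Ioi_setIntegral_Ioi_swap [NormedSpace ℝ E]
    (hF : IntegrableOn (Function.uncurry F) (wedge l)) :
    ∫ u in Ioi l, ∫ v in Ioi u, F u v = ∫ v in Ioi l, ∫ u in Ioo l v, F u v := by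
  have hG : Integrable ((wedge l).indicator (Function.uncurry F)) (volume.prod volume) := by
    rw [← Measure.volume_eq_prod]
    exact hF.integrable_indicator (measurableSet_wedge l)
  rw [← integral_indicator measurableSet_Ioi, ← integral_indicator measurableSet_Ioi]
  simp only [← integral_indicator_wedge_fst, ← integral_indicator_wedge_snd]
  exact integral_integral_swap hG

end Wedge

section Weyl

variable {X : Type*} [NormedAddCommGroup X] [NormedSpace ℝ X]

lemma integrableOn_Ioi_fracKernel_smul {r : ℝ → X} {l γ δ : ℝ} (hγ : 0 < γ) (hγδ : γ < δ)
    (hr : ContinuousOn r (Ici l)) (hdecay : r =O[atTop] fun v => v ^ (-δ)) :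
    IntegrableOn (fun v => fracKernel γ (v - l) • r v) (Ioi l) := by
  have h := (integrableOn_Ioi_sub_rpow_smul hγ hγδ hr hdecay).smul (Real.Gamma γ)⁻¹
  refine IntegrableOn.congr_fun h (fun v _ => ?_) measurableSet_Ioi
  simp only [Pi.smul_apply, fracKernel, div_eq_inv_mul, mul_smul]

variable [CompleteSpace X]

/-- The paper's `r_α(l)`. -/
noncomputable def weylIntegral (α : ℝ) (r : ℝ → X) (l : ℝ) : X :=
  ∫ v in Ioi l, fracKernel α (v - l) • r v

theorem weylIntegral_weylIntegral {r : ℝ → X} {l α β δ : ℝ} (hα : 0 < α) (hβ : 0 < β)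
    (hαβ : α + β < δ) (hr : ContinuousOn r (Ici l)) (hdecay : r =O[atTop] fun v => v ^ (-δ)) :
    weylIntegral β (weylIntegral α r) l = weylIntegral (α + β) r l := by
  set F : ℝ → ℝ → X := fun u v => (fracKernel β (u - l) * fracKernel α (v - u)) • r v
  have hconv (v : ℝ) (hv : l < v) : ∫ u in Ioo l v, F u v = fracKernel (α + β) (v - l) • r v := by
    rw [integral_smul_const, integral_Ioo_fracKernel_mul_fracKernel hα hβ hv]
  have hconv_norm (v : ℝ) (hv : l < v) :
      ∫ u in Ioo l v, ‖F u v‖ = ‖fracKernel (α + β) (v - l) • r v‖ := by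
    rw [norm_smul, Real.norm_of_nonneg (fracKernel_pos (add_pos hα hβ) (sub_pos.2 hv)).le,
      ← integral_Ioo_fracKernel_mul_fracKernel hα hβ hv, ← integral_mul_const]
    refine setIntegral_congr_fun measurableSet_Ioo fun u hu => ?_
    rw [norm_smul, Real.norm_of_nonneg (mul_pos (fracKernel_pos hβ (sub_pos.2 hu.1))
      (fracKernel_pos hα (sub_pos.2 hu.2))).le]
  have hcont : ContinuousOn (Function.uncurry F) (wedge l) :=
    (((continuousOn_fracKernel β).comp (continuous_fst.sub continuous_const).continuousOn
      fun p hp => sub_pos.2 hp.1).mul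
      ((continuousOn_fracKernel α).comp (continuous_snd.sub continuous_fst).continuousOn
      fun p hp => sub_pos.2 hp.2)).smul
      (hr.comp continuous_snd.continuousOn fun p hp => (hp.1.trans hp.2).le)
  have hF : IntegrableOn (Function.uncurry F) (wedge l) :=
    integrableOn_wedge_of_integrableOn_Ioo (hcont.aestronglyMeasurable (measurableSet_wedge l))
      (fun v hv => (integrableOn_Ioo_fracKernel_mul_fracKernel hα hβ hv).smul_const (r v))
      (IntegrableOn.congr_fun (integrableOn_Ioi_fracKernel_smul (add_pos hα hβ) hαβ hr hdecay).norm
        (fun v hv => (hconv_norm v hv).symm) measurableSet_Ioi)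
  calc weylIntegral β (weylIntegral α r) l = ∫ u in Ioi l, ∫ v in Ioi u, F u v := by
        simp only [weylIntegral, F, ← integral_smul, smul_smul]
    _ = ∫ v in Ioi l, ∫ u in Ioo l v, F u v := setIntegral_Ioi_setIntegral_Ioi_swap hF
    _ = weylIntegral (α + β) r l := setIntegral_congr_fun measurableSet_Ioi hconv

end Weyl

theorem stmt1_general {X : Type*} [NormedAddCommGroup X] [NormedSpace ℝ X] [CompleteSpace X]
    (M a α β δ : ℝ) (hα : 0 < α) (hβ : 0 < β) (hαβ : α + β < δ)
    (r : ℝ → X) (hr : ContinuousOn r (Ioi a))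
    (hbound : ∀ l, a < l → ‖r l‖ ≤ M / l ^ δ) :
    ∀ l, a < l →
      (∫ u in Ioi l, ((u - l) ^ (β - 1) / Real.Gamma β) •
          ∫ v in Ioi u, ((v - u) ^ (α - 1) / Real.Gamma α) • r v)
        = ∫ v in Ioi l, ((v - l) ^ (α + β - 1) / Real.Gamma (α + β)) • r v := by
  intro l hl
  have hdecay : r =O[atTop] fun v => v ^ (-δ) := by
    refine .of_bound M ?_
    filter_upwards [eventually_gt_atTop (max a 0)] with v hv
    have hv0 : 0 < v := (le_max_right a 0).trans_lt hv
    rw [Real.norm_of_nonneg (Real.rpow_nonneg hv0.le _), Real.rpow_neg hv0.le, ← div_eq_mul_inv]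
    exact hbound v ((le_max_left a 0).trans_lt hv)
  exact weylIntegral_weylIntegral hα hβ hαβ (hr.mono (Ici_subset_Ioi.2 hl)) hdecay

theorem stmt1 {X : Type*} [NormedAddCommGroup X] [NormedSpace ℝ X] [CompleteSpace X]
    (M a α β δ : ℝ) (hM : 0 < M) (ha : 0 < a) (hδ : 0 < δ)
    (hα : 0 < α) (hβ : 0 < β) (hαβ : α + β < δ)
    (r : ℝ → X) (hr : ContinuousOn r (Ioi a))
    (hbound : ∀ l, a < l → ‖r l‖ ≤ M / l ^ δ) :
    ∀ l, a < l →
      (∫ u in Ioi l, ((u - l) ^ (β - 1) / Real.Gamma β) •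
          ∫ v in Ioi u, ((v - u) ^ (α - 1) / Real.Gamma α) • r v)
        = ∫ v in Ioi l, ((v - l) ^ (α + β - 1) / Real.Gamma (α + β)) • r v :=
  stmt1_general M a α β δ hα hβ hαβ r hr hbound
end

section
/- Let $X$ be a Banach space and $r:(a,\infty)\to\mathcal{L}(X)$ a pseudo-resolvent satisfying, for some $M>0$, $\omega\le a$, $\alpha>\kappa\ge 0$, the bound $\|(\lambda-\omega)^{\alpha+1} r(\lambda)/\lambda^{\kappa}\|\le M\,\Gamma(\alpha+1)$ for all $\lambda>a$. Then $\|\lambda r(\lambda)\|\to 0$ as $\lambda\to\infty$, and consequently $r(\lambda)=0$ for all $\lambda>a$. -/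
/-!
The bound says `‖r l‖ = O(l ^ κ / (l - ω) ^ (α + 1)) = O(l ^ (κ - α - 1))`, so `‖l • r l‖ → 0`
because `κ < α`; in particular `r μ → 0` and `(μ - l) • r μ → 0`. Letting `μ → ∞` in
`r l = r μ + r l * ((μ - l) • r μ)` then gives `r l = 0`.
-/

open Filter Topology

theorem tendsto_self_div_rpow_sub_div_rpow_atTop {ω α κ : ℝ} (hακ : κ < α) :
    Tendsto (fun l : ℝ => l / ((l - ω) ^ (α + 1) / l ^ κ)) atTop (𝓝 0) := by
  have hpow : Tendsto (fun l : ℝ => l ^ (κ - α)) atTop (𝓝 0) := by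
    simpa using tendsto_rpow_neg_atTop (sub_pos.2 hακ)
  have hone : Tendsto (fun l : ℝ => (1 - ω / l) ^ (α + 1)) atTop (𝓝 1) := by
    have : Tendsto (fun l : ℝ => 1 - ω / l) atTop (𝓝 1) := by
      simpa using (tendsto_const_nhds (x := (1 : ℝ))).sub
        (tendsto_const_nhds.div_atTop tendsto_id)
    simpa using this.rpow_const (Or.inl one_ne_zero)
  have hlim := hpow.div hone one_ne_zero
  rw [zero_div] at hlim
  refine hlim.congr' ?_
  filter_upwards [eventually_gt_atTop (max ω 0)] with l hl
  have hl0 : 0 < l := (le_max_right _ _).trans_lt hl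
  have hlω : 0 < 1 - ω / l := by
    rw [sub_pos, div_lt_one hl0]; exact (le_max_left _ _).trans_lt hl
  have hsplit : (l - ω) ^ (α + 1) = (1 - ω / l) ^ (α + 1) * l ^ (α + 1) := by
    rw [← Real.mul_rpow hlω.le hl0.le, one_sub_mul, div_mul_cancel₀ _ hl0.ne']
  have hexp : l ^ (κ - α) * l ^ (α + 1) = l * l ^ κ := by
    rw [← Real.rpow_add hl0, mul_comm, ← Real.rpow_add_one hl0.ne']; ring_nf
  rw [Pi.div_apply, hsplit, div_div_eq_mul_div, ← hexp,
    mul_div_mul_right _ _ (by positivity)]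

theorem tendsto_smul_zero_of_isBoundedUnder_smul {ι E : Type*} [NormedAddCommGroup E]
    [NormedSpace ℝ E] {L : Filter ι} {f : ι → E} {g c : ι → ℝ} {C : ℝ}
    (hbound : ∀ᶠ i in L, ‖c i • f i‖ ≤ C) (hc : ∀ᶠ i in L, c i ≠ 0)
    (hgc : Tendsto (fun i => g i / c i) L (𝓝 0)) :
    Tendsto (fun i => g i • f i) L (𝓝 0) := by
  refine (hgc.zero_smul_isBoundedUnder_le ⟨C, hbound⟩).congr' ?_
  filter_upwards [hc] with i hi
  rw [smul_smul, div_mul_cancel₀ _ hi]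

def IsPseudoResolvent {A : Type*} [Ring A] [Module ℝ A] (a : ℝ) (r : ℝ → A) : Prop :=
  ∀ l μ : ℝ, a < l → a < μ → r l - r μ = (μ - l) • (r l * r μ)

theorem IsPseudoResolvent.eq_zero_of_tendsto_smul {A : Type*} [NormedRing A] [NormedAlgebra ℝ A]
    {a : ℝ} {r : ℝ → A} (hr : IsPseudoResolvent a r)
    (hlim : Tendsto (fun μ => μ • r μ) atTop (𝓝 0)) {l : ℝ} (hl : a < l) : r l = 0 := by
  have hr0 : Tendsto r atTop (𝓝 0) := by
    have h := tendsto_inv_atTop_zero.smul hlim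
    rw [zero_smul] at h
    refine h.congr' ?_
    filter_upwards [eventually_ne_atTop 0] with μ hμ
    rw [smul_smul, inv_mul_cancel₀ hμ, one_smul]
  have hshift : Tendsto (fun μ => (μ - l) • r μ) atTop (𝓝 0) := by
    have h := hlim.sub (hr0.const_smul l)
    rw [smul_zero, sub_zero] at h
    simpa only [sub_smul] using h
  have h := hr0.add (hshift.const_mul (r l))
  rw [mul_zero, add_zero] at h
  refine tendsto_nhds_unique (tendsto_const_nhds.congr' ?_) h
  filter_upwards [eventually_gt_atTop a] with μ hμ
  rw [mul_smul_comm, ← hr l μ hl hμ, add_sub_cancel]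

theorem stmt7_general {X : Type*} [NormedAddCommGroup X] [NormedSpace ℝ X]
    (a M ω α κ : ℝ) (hακ : κ < α)
    (r : ℝ → X →L[ℝ] X)
    (hres : ∀ l μ : ℝ, a < l → a < μ → r l - r μ = (μ - l) • (r l ∘L r μ))
    (hbound : ∀ l, a < l →
      ‖((l - ω) ^ (α + 1) / l ^ κ) • r l‖ ≤ M * Real.Gamma (α + 1)) :
    Filter.Tendsto (fun l : ℝ => ‖l • r l‖) Filter.atTop (nhds 0) ∧
    ∀ l, a < l → r l = 0 := by
  have hpos : ∀ᶠ l in atTop, (l - ω) ^ (α + 1) / l ^ κ ≠ 0 := by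
    filter_upwards [eventually_gt_atTop (max ω 0)] with l hl
    have hlω : 0 < l - ω := sub_pos.2 ((le_max_left _ _).trans_lt hl)
    have hl0 : 0 < l := (le_max_right _ _).trans_lt hl
    positivity
  have hlim : Tendsto (fun l : ℝ => l • r l) atTop (𝓝 0) :=
    tendsto_smul_zero_of_isBoundedUnder_smul ((eventually_gt_atTop a).mono hbound) hpos
      (tendsto_self_div_rpow_sub_div_rpow_atTop hακ)
  exact ⟨tendsto_zero_iff_norm_tendsto_zero.1 hlim,
    fun l hl => IsPseudoResolvent.eq_zero_of_tendsto_smul (A := X →L[ℝ] X) hres hlim hl⟩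

theorem stmt7 {X : Type*} [NormedAddCommGroup X] [NormedSpace ℝ X]
    (a M ω α κ : ℝ) (hM : 0 < M) (ha : 0 ≤ a) (hωa : ω ≤ a) (hκ : 0 ≤ κ) (hακ : κ < α)
    (r : ℝ → X →L[ℝ] X)
    (hres : ∀ l μ : ℝ, a < l → a < μ → r l - r μ = (μ - l) • (r l ∘L r μ))
    (hbound : ∀ l, a < l →
      ‖((l - ω) ^ (α + 1) / l ^ κ) • r l‖ ≤ M * Real.Gamma (α + 1)) :
    Filter.Tendsto (fun l : ℝ => ‖l • r l‖) Filter.atTop (nhds 0) ∧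
    ∀ l, a < l → r l = 0 :=
  stmt7_general a M ω α κ hακ r hres hbound
end

section
/- Let $X$ be a complex Banach space, $k\in\mathbb{N}$, and $S_k:\{\operatorname{Re} z>0\}\to\mathcal{L}(X)$ holomorphic satisfying $\|S_k(z+h)-S_k(z)\|\le M(|z|+|h|)^{\alpha}\,|h|^{k-\alpha-\beta}\, e^{\omega(|z|+|h|)}$ for all $z,z+h$ in the open right half-plane, where $M,\omega>0$, $\alpha,\beta\ge 0$ and $k>\alpha+\beta$. If $T(z)=S_k^{(k)}(z)$ denotes the $k$-th complex derivative, then $\|T(z)\|\le k!\,2^{\beta} 3^{\alpha} M\, \frac{|z|^{\alpha}}{(\operatorname{Re} z)^{\alpha+\beta}}\, e^{3\omega|z|/2}$ for every $z$ with $\operatorname{Re} z>0$. -/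
/-!
Since `k ≥ 1`, the `k`-th derivative of `S` at `z` is that of `ζ ↦ S ζ - S z`, so Cauchy's estimate
on the circle of radius `r = Re z / 2` around `z` (which stays in the half-plane) bounds it by
`k! · sup ‖S ζ - S z‖ / r ^ k`. On that circle the increment hypothesis with `|h| = r` gives
`M (|z| + r)^α r^(k-α-β) e^{ω(|z|+r)}`, and `|z| + r ≤ 3|z|/2` turns this into the claimed bound.
-/

open Complex Metric Real

theorem Complex.norm_iteratedDeriv_le_of_forall_mem_sphere_norm_sub_le {F : Type*}
    [NormedAddCommGroup F] [NormedSpace ℂ F] [CompleteSpace F] {f : ℂ → F} {c : ℂ} {R C : ℝ}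
    {n : ℕ} (hn : 0 < n) (hR : 0 < R) (hf : DiffContOnCl ℂ f (ball c R))
    (hC : ∀ z ∈ sphere c R, ‖f z - f c‖ ≤ C) :
    ‖iteratedDeriv n f c‖ ≤ n.factorial * C / R ^ n := by
  rw [← iteratedDeriv_const_add hn (-f c)]
  refine norm_iteratedDeriv_le_of_forall_mem_sphere_norm_le n hR (hf.const_add _) fun z hz => ?_
  simpa only [neg_add_eq_sub] using hC z hz

theorem Complex.closedBall_subset_re_pos {z : ℂ} {r : ℝ} (hr : r < z.re) :
    closedBall z r ⊆ {w : ℂ | 0 < w.re} := by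
  intro w hw
  have hre : |w.re - z.re| ≤ r := by
    simpa only [sub_re] using (abs_re_le_norm (w - z)).trans (mem_closedBall_iff_norm.mp hw)
  show 0 < w.re
  linarith [(abs_le.mp hre).1]

theorem Real.rpow_sub_div_pow_half {x : ℝ} (hx : 0 < x) (k : ℕ) (α β : ℝ) :
    (x / 2) ^ ((k : ℝ) - α - β) / (x / 2) ^ k = 2 ^ (α + β) / x ^ (α + β) := by
  have hx2 : 0 < x / 2 := by positivity
  rw [sub_sub, rpow_sub hx2, rpow_natCast, div_div_cancel_left' (pow_ne_zero k hx2.ne'),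
    div_rpow hx.le zero_le_two, inv_div]

theorem Real.increment_bound_div_pow_half_le {M ω α β A x : ℝ} (k : ℕ) (hM : 0 ≤ M) (hω : 0 ≤ ω)
    (hα : 0 ≤ α) (hx : 0 < x) (hxA : x ≤ A) :
    M * (A + x / 2) ^ α * (x / 2) ^ ((k : ℝ) - α - β) * Real.exp (ω * (A + x / 2)) / (x / 2) ^ k ≤
      2 ^ β * 3 ^ α * M * (A ^ α / x ^ (α + β)) * Real.exp (3 * ω * A / 2) := by
  have hbase : (A + x / 2) ^ α ≤ (3 / 2) ^ α * A ^ α := by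
    rw [← mul_rpow (by norm_num) (by linarith)]
    exact rpow_le_rpow (by linarith) (by linarith) hα
  have hexp : Real.exp (ω * (A + x / 2)) ≤ Real.exp (3 * ω * A / 2) :=
    exp_le_exp.mpr (by nlinarith)
  have hconst : (3 / 2 : ℝ) ^ α * 2 ^ (α + β) = 2 ^ β * 3 ^ α := by
    rw [div_rpow (by norm_num) (by norm_num), rpow_add two_pos]
    field_simp
  calc M * (A + x / 2) ^ α * (x / 2) ^ ((k : ℝ) - α - β) * Real.exp (ω * (A + x / 2)) / (x / 2) ^ k
      = M * (A + x / 2) ^ α * Real.exp (ω * (A + x / 2)) *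
          ((x / 2) ^ ((k : ℝ) - α - β) / (x / 2) ^ k) := by ring
    _ = M * (A + x / 2) ^ α * Real.exp (ω * (A + x / 2)) * (2 ^ (α + β) / x ^ (α + β)) := by
      rw [rpow_sub_div_pow_half hx]
    _ ≤ M * ((3 / 2) ^ α * A ^ α) * Real.exp (3 * ω * A / 2) * (2 ^ (α + β) / x ^ (α + β)) := by
      gcongr
      exact mul_nonneg hM (mul_nonneg (by positivity) (rpow_nonneg (by linarith) α))
    _ = 2 ^ β * 3 ^ α * M * (A ^ α / x ^ (α + β)) * Real.exp (3 * ω * A / 2) := by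
      rw [← hconst]; ring

theorem stmt12 {X : Type*} [NormedAddCommGroup X] [NormedSpace ℂ X] [CompleteSpace X]
    (k : ℕ) (M ω α β : ℝ) (hM : 0 < M) (hω : 0 < ω) (hα : 0 ≤ α) (hβ : 0 ≤ β)
    (hk : α + β < (k : ℝ))
    (S : ℂ → X →L[ℂ] X) (hS : DifferentiableOn ℂ S {z : ℂ | 0 < z.re})
    (hdiff : ∀ z h : ℂ, 0 < z.re → 0 < (z + h).re →
      ‖S (z + h) - S z‖ ≤
        M * (‖z‖ + ‖h‖) ^ α * ‖h‖ ^ ((k : ℝ) - α - β) *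
          Real.exp (ω * (‖z‖ + ‖h‖))) :
    ∀ z : ℂ, 0 < z.re →
      ‖iteratedDeriv k S z‖ ≤
        (k.factorial : ℝ) * 2 ^ β * 3 ^ α * M * (‖z‖ ^ α / z.re ^ (α + β)) *
          Real.exp (3 * ω * ‖z‖ / 2) := by
  intro z hz
  have hk₀ : 0 < k := by exact_mod_cast (add_nonneg hα hβ).trans_lt hk
  have hball : closedBall z (z.re / 2) ⊆ {w : ℂ | 0 < w.re} := closedBall_subset_re_pos (by linarith)
  have hsphere : ∀ ζ ∈ sphere z (z.re / 2), ‖S ζ - S z‖ ≤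
      M * (‖z‖ + z.re / 2) ^ α * (z.re / 2) ^ ((k : ℝ) - α - β) *
        Real.exp (ω * (‖z‖ + z.re / 2)) := by
    intro ζ hζ
    have hdist : ‖ζ - z‖ = z.re / 2 := mem_sphere_iff_norm.mp hζ
    have hζ_re : 0 < (z + (ζ - z)).re := by
      rw [add_sub_cancel]; exact hball (sphere_subset_closedBall hζ)
    simpa only [add_sub_cancel, hdist] using hdiff z (ζ - z) hz hζ_re
  calc ‖iteratedDeriv k S z‖
      ≤ k.factorial * (M * (‖z‖ + z.re / 2) ^ α * (z.re / 2) ^ ((k : ℝ) - α - β) *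
          Real.exp (ω * (‖z‖ + z.re / 2))) / (z.re / 2) ^ k :=
        norm_iteratedDeriv_le_of_forall_mem_sphere_norm_sub_le hk₀ (by linarith)
          (hS.diffContOnCl_ball hball) hsphere
    _ ≤ k.factorial * (2 ^ β * 3 ^ α * M * (‖z‖ ^ α / z.re ^ (α + β)) *
          Real.exp (3 * ω * ‖z‖ / 2)) := by
        rw [mul_div_assoc]
        gcongr
        exact increment_bound_div_pow_half_le k hM.le hω.le hα hz (re_le_norm z)
    _ = _ := by ring
end
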